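/- U(V,Q) = U_L(V,Q) ∩ U_R(V,Q): an element g of Cl(V,Q) satisfies g·c(g) = c(g)·g = 1 if and only if both left multiplication L(g) and right multiplication R(g) preserve the canonical bilinear form Q̄. -/

import Mathlib

/-!
Write `p` for the scalar component in the monomial basis. For an orthogonal basis, `e_s e_t`
is a multiple of `e_{s ∆ t}`, so `p (e_s e_t) = 0` unless `s = t`; hence `p (x y) = p (y x)`,
and since every `e_s` is invertible, `p (e_s e_s) ≠ 0`, so `(x, y) ↦ p (x y)` is
nondegenerate. Now `Q̄(xg, yg) = p (x · g c(g) · c(y))` and, by the trace property,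
`Q̄(gx, gy) = p (x c(y) · c(g) g)`; putting `y = 1` and using nondegeneracy, right invariance
is equivalent to `g c(g) = 1` and left invariance to `c(g) g = 1`.
-/

open CliffordAlgebra

section Defs

variable {F V : Type*} [Field F] [AddCommGroup V] [Module F V]

/-- The monomial `e_I` associated to a multi-index `I`, realized as a finite set of
indices multiplied in increasing order (with `e_∅ = 1`). -/
noncomputable def eI (Qf : QuadraticForm F V) {n : ℕ} (b : Module.Basis (Fin n) F V)
    (s : Finset (Fin n)) : CliffordAlgebra Qf :=
  ((s.sort (· ≤ ·)).map fun i => ι Qf (b i)).prod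

/-- The conjugation anti-automorphism `c = α ∘ τ` of the Clifford algebra. -/
noncomputable def cconj (Qf : QuadraticForm F V) :
    CliffordAlgebra Qf →ₗ[F] CliffordAlgebra Qf :=
  involute.toLinearMap ∘ₗ (reverse (Q := Qf))

/-- The canonical bilinear form `Q̄(x,y) = p(x · c(y))`, where `p` is the scalar-component
projection determined by a monomial basis `bas` (indexed by multi-indices, with
`bas s = e_s`, in particular `bas ∅ = 1`). -/
noncomputable def Qbar {Qf : QuadraticForm F V} {n : ℕ}
    (bas : Module.Basis (Finset (Fin n)) F (CliffordAlgebra Qf))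
    (x y : CliffordAlgebra Qf) : F :=
  bas.coord ∅ (x * cconj Qf y)

/-- The Lie algebra `G = {ξ : c(ξ) = -ξ}` of infinitesimal isometries, as a submodule. -/
noncomputable def Gsub (Qf : QuadraticForm F V) : Submodule F (CliffordAlgebra Qf) :=
  LinearMap.ker (cconj Qf + LinearMap.id)

end Defs

open scoped symmDiff

lemma Finset.insert_eq_singleton_symmDiff {α : Type*} [DecidableEq α] {a : α} {s : Finset α}
    (h : a ∉ s) : insert a s = {a} ∆ s := by
  rw [Finset.insert_eq, Finset.symmDiff_eq_union (Finset.disjoint_singleton_left.2 h)]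

section Monomials

variable {F V : Type*} [Field F] [AddCommGroup V] [Module F V]
  {Qf : QuadraticForm F V} {n : ℕ} {b : Module.Basis (Fin n) F V}

lemma eI_empty : eI Qf b ∅ = 1 := by simp [eI]

lemma eI_insert_of_forall_lt {j : Fin n} {u : Finset (Fin n)} (h : ∀ k ∈ u, j < k) :
    eI Qf b (insert j u) = ι Qf (b j) * eI Qf b u := by
  have hj : j ∉ u := fun hj => lt_irrefl j (h j hj)
  rw [eI, Finset.sort_insert _ (fun k hk => (h k hk).le) hj, List.map_cons, List.prod_cons]
  rfl

lemma ι_mul_eI (hortho : Pairwise fun i j => Qf.IsOrtho (b i) (b j)) (i : Fin n)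
    (t : Finset (Fin n)) : ∃ μ : F, ι Qf (b i) * eI Qf b t = μ • eI Qf b ({i} ∆ t) := by
  induction t using Finset.induction_on_min generalizing i with
  | empty =>
    refine ⟨1, ?_⟩
    rw [one_smul, eI_empty, mul_one, ← Finset.bot_eq_empty, symmDiff_bot]
    simp [eI]
  | insert j t hjt ih =>
    have hj : j ∉ t := fun hj => lt_irrefl j (hjt j hj)
    rw [eI_insert_of_forall_lt hjt]
    rcases lt_trichotomy i j with hij | rfl | hji
    · have hi : ∀ k ∈ insert j t, i < k := by
        simpa [hij] using fun k hk => hij.trans (hjt k hk)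
      refine ⟨1, ?_⟩
      rw [one_smul, ← eI_insert_of_forall_lt hjt, ← eI_insert_of_forall_lt hi,
        Finset.insert_eq_singleton_symmDiff fun hm => lt_irrefl i (hi i hm)]
    · refine ⟨Qf (b i), ?_⟩
      rw [← mul_assoc, ι_sq_scalar, Finset.insert_eq_singleton_symmDiff hj,
        symmDiff_symmDiff_cancel_left, Algebra.smul_def]
    · obtain ⟨μ, hμ⟩ := ih i
      have hlt : ∀ k ∈ {i} ∆ t, j < k := by
        intro k hk
        rcases Finset.mem_symmDiff.1 hk with ⟨hk, -⟩ | ⟨hk, -⟩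
        · rwa [Finset.mem_singleton.1 hk]
        · exact hjt k hk
      refine ⟨-μ, ?_⟩
      rw [← mul_assoc, ι_mul_ι_comm_of_isOrtho (hortho hji.ne'), neg_mul, mul_assoc, hμ,
        mul_smul_comm, ← eI_insert_of_forall_lt hlt,
        Finset.insert_eq_singleton_symmDiff fun hm => lt_irrefl j (hlt j hm),
        Finset.insert_eq_singleton_symmDiff hj, symmDiff_left_comm, neg_smul]

lemma eI_mul_eI (hortho : Pairwise fun i j => Qf.IsOrtho (b i) (b j))
    (s t : Finset (Fin n)) : ∃ μ : F, eI Qf b s * eI Qf b t = μ • eI Qf b (s ∆ t) := by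
  induction s using Finset.induction_on_min with
  | empty =>
    exact ⟨1, by rw [one_smul, eI_empty, one_mul, ← Finset.bot_eq_empty, bot_symmDiff]⟩
  | insert a s has ih =>
    obtain ⟨μ, hμ⟩ := ih
    obtain ⟨ν, hν⟩ := ι_mul_eI hortho a (s ∆ t)
    refine ⟨μ * ν, ?_⟩
    rw [eI_insert_of_forall_lt has, mul_assoc, hμ, mul_smul_comm, hν, smul_smul,
      Finset.insert_eq_singleton_symmDiff fun ha => lt_irrefl a (has a ha), symmDiff_assoc]

lemma isUnit_eI (hQne : ∀ i, Qf (b i) ≠ 0) (s : Finset (Fin n)) : IsUnit (eI Qf b s) :=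
  List.prod_isUnit <| by
    simpa using fun i _ => isUnit_ι_of_isUnit Qf (hQne i).isUnit

end Monomials

section ScalarPart

variable {F V : Type*} [Field F] [AddCommGroup V] [Module F V]
  {Qf : QuadraticForm F V} {n : ℕ} {b : Module.Basis (Fin n) F V}
  {bas : Module.Basis (Finset (Fin n)) F (CliffordAlgebra Qf)}

lemma coord_eI (hbas : ∀ s, bas s = eI Qf b s) (u s : Finset (Fin n)) :
    bas.coord u (eI Qf b s) = if s = u then 1 else 0 := by
  rw [← hbas, Module.Basis.coord_apply, Module.Basis.repr_self, Finsupp.single_apply]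

lemma coord_empty_eI_mul_eI_of_ne (hortho : Pairwise fun i j => Qf.IsOrtho (b i) (b j))
    (hbas : ∀ s, bas s = eI Qf b s) {s t : Finset (Fin n)} (hst : s ≠ t) :
    bas.coord ∅ (eI Qf b s * eI Qf b t) = 0 := by
  obtain ⟨μ, hμ⟩ := eI_mul_eI hortho s t
  rw [hμ, map_smul, coord_eI hbas, if_neg (by simpa using hst), smul_zero]

lemma coord_empty_mul_comm (hortho : Pairwise fun i j => Qf.IsOrtho (b i) (b j))
    (hbas : ∀ s, bas s = eI Qf b s) (x y : CliffordAlgebra Qf) :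
    bas.coord ∅ (x * y) = bas.coord ∅ (y * x) := by
  have hflip : (LinearMap.mul F _).compr₂ (bas.coord ∅) =
      (LinearMap.mul F _).flip.compr₂ (bas.coord ∅) := by
    refine bas.ext fun s => bas.ext fun t => ?_
    simp only [LinearMap.compr₂_apply, LinearMap.mul_apply', LinearMap.flip_apply, hbas]
    by_cases hst : s = t
    · rw [hst]
    · rw [coord_empty_eI_mul_eI_of_ne hortho hbas hst,
        coord_empty_eI_mul_eI_of_ne hortho hbas (Ne.symm hst)]
  simpa using LinearMap.congr_fun₂ hflip x y

lemma coord_empty_eI_mul (hortho : Pairwise fun i j => Qf.IsOrtho (b i) (b j))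
    (hbas : ∀ s, bas s = eI Qf b s) (s : Finset (Fin n)) (v : CliffordAlgebra Qf) :
    bas.coord ∅ (eI Qf b s * v) = bas.coord ∅ (eI Qf b s * eI Qf b s) * bas.coord s v := by
  have hcomp : (bas.coord ∅).comp (LinearMap.mulLeft F (eI Qf b s)) =
      bas.coord ∅ (eI Qf b s * eI Qf b s) • bas.coord s := by
    refine bas.ext fun t => ?_
    simp only [LinearMap.comp_apply, LinearMap.mulLeft_apply, LinearMap.smul_apply,
      smul_eq_mul, hbas, coord_eI hbas]
    by_cases hst : s = t
    · simp [hst]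
    · simp [coord_empty_eI_mul_eI_of_ne hortho hbas hst, Ne.symm hst]
  exact LinearMap.congr_fun hcomp v

lemma coord_empty_eI_mul_self_ne_zero (hortho : Pairwise fun i j => Qf.IsOrtho (b i) (b j))
    (hQne : ∀ i, Qf (b i) ≠ 0) (hbas : ∀ s, bas s = eI Qf b s) (s : Finset (Fin n)) :
    bas.coord ∅ (eI Qf b s * eI Qf b s) ≠ 0 := by
  obtain ⟨μ, hμ⟩ := eI_mul_eI hortho s s
  have hunit : IsUnit (μ • (1 : CliffordAlgebra Qf)) := by
    simpa [hμ, eI_empty] using (isUnit_eI hQne s).mul (isUnit_eI hQne s)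
  rintro h0
  rw [hμ, symmDiff_self, Finset.bot_eq_empty, map_smul, coord_eI hbas, if_pos rfl,
    smul_eq_mul, mul_one] at h0
  rw [h0, zero_smul, isUnit_zero_iff, ← eI_empty (b := b), ← hbas] at hunit
  exact bas.ne_zero ∅ hunit.symm

lemma eq_one_of_forall_coord_empty_mul_eq (hortho : Pairwise fun i j => Qf.IsOrtho (b i) (b j))
    (hQne : ∀ i, Qf (b i) ≠ 0) (hbas : ∀ s, bas s = eI Qf b s) {a : CliffordAlgebra Qf}
    (ha : ∀ x, bas.coord ∅ (x * a) = bas.coord ∅ x) : a = 1 := by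
  rw [← sub_eq_zero, ← bas.forall_coord_eq_zero_iff]
  intro s
  have h := coord_empty_eI_mul hortho hbas s (a - 1)
  rw [mul_sub, map_sub, mul_one, ha, sub_self, eq_comm, mul_eq_zero] at h
  exact h.resolve_left (coord_empty_eI_mul_self_ne_zero hortho hQne hbas s)

end ScalarPart

section Conjugation

variable {F V : Type*} [Field F] [AddCommGroup V] [Module F V] {Qf : QuadraticForm F V}

lemma cconj_mul (x y : CliffordAlgebra Qf) : cconj Qf (x * y) = cconj Qf y * cconj Qf x := by
  simp [cconj]

lemma cconj_one : cconj Qf (1 : CliffordAlgebra Qf) = 1 := by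
  simp [cconj]

variable {n : ℕ} {b : Module.Basis (Fin n) F V}
  {bas : Module.Basis (Finset (Fin n)) F (CliffordAlgebra Qf)}

lemma forall_Qbar_mul_right_eq_iff (hortho : Pairwise fun i j => Qf.IsOrtho (b i) (b j))
    (hQne : ∀ i, Qf (b i) ≠ 0) (hbas : ∀ s, bas s = eI Qf b s) (g : CliffordAlgebra Qf) :
    (∀ x y, Qbar bas (x * g) (y * g) = Qbar bas x y) ↔ g * cconj Qf g = 1 := by
  constructor
  · intro hg
    refine eq_one_of_forall_coord_empty_mul_eq hortho hQne hbas fun x => ?_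
    simpa [Qbar, cconj_one, mul_assoc] using hg x 1
  · intro hg x y
    rw [Qbar, Qbar, cconj_mul, mul_assoc, ← mul_assoc g, hg, one_mul]

lemma forall_Qbar_mul_left_eq_iff (hortho : Pairwise fun i j => Qf.IsOrtho (b i) (b j))
    (hQne : ∀ i, Qf (b i) ≠ 0) (hbas : ∀ s, bas s = eI Qf b s) (g : CliffordAlgebra Qf) :
    (∀ x y, Qbar bas (g * x) (g * y) = Qbar bas x y) ↔ cconj Qf g * g = 1 := by
  have hcycle : ∀ x y,
      Qbar bas (g * x) (g * y) = bas.coord ∅ (x * cconj Qf y * (cconj Qf g * g)) := by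
    intro x y
    rw [Qbar, cconj_mul, mul_assoc, coord_empty_mul_comm hortho hbas]
    simp only [mul_assoc]
  constructor
  · intro hg
    refine eq_one_of_forall_coord_empty_mul_eq hortho hQne hbas fun x => ?_
    simpa [Qbar, cconj_one] using (hcycle x 1).symm.trans (hg x 1)
  · intro hg x y
    rw [hcycle, hg, mul_one, Qbar]

end Conjugation

lemma isOrtho_of_eq_neg_bilin {F V : Type*} [Field F] [AddCommGroup V] [Module F V]
    {B : LinearMap.BilinForm F V} {Qf : QuadraticForm F V} (hQ : ∀ v, Qf v = -(B v v))
    {v w : V} (hvw : B v w = 0) (hwv : B w v = 0) : Qf.IsOrtho v w := by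
  simp only [QuadraticMap.isOrtho_def, hQ, map_add, LinearMap.add_apply, hvw, hwv]
  ring

lemma apply_basis_ne_zero_of_nondegenerate {F V : Type*} [Field F] [AddCommGroup V]
    [Module F V] {B : LinearMap.BilinForm F V} (hnd : ∀ v : V, (∀ w : V, B v w = 0) → v = 0)
    {Qf : QuadraticForm F V} (hQ : ∀ v, Qf v = -(B v v)) {n : ℕ} {b : Module.Basis (Fin n) F V}
    (hortho : ∀ i j, i ≠ j → B (b i) (b j) = 0) (i : Fin n) : Qf (b i) ≠ 0 := by
  intro h0
  have hBi : B (b i) = 0 := b.ext fun j => by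
    rcases eq_or_ne i j with rfl | hij
    · simpa [hQ] using h0
    · exact hortho i j hij
  exact b.ne_zero i (hnd (b i) fun w => by rw [hBi, LinearMap.zero_apply])

theorem stmt14_general {F V : Type*} [Field F] [AddCommGroup V] [Module F V]
    (B : LinearMap.BilinForm F V)
    (hnd : ∀ v : V, (∀ w : V, B v w = 0) → v = 0)
    (Qf : QuadraticForm F V) (hQ : ∀ v : V, Qf v = -(B v v))
    {n : ℕ} (b : Module.Basis (Fin n) F V)
    (hortho : ∀ i j : Fin n, i ≠ j → B (b i) (b j) = 0)
    (bas : Module.Basis (Finset (Fin n)) F (CliffordAlgebra Qf))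
    (hbas : ∀ s : Finset (Fin n), bas s = eI Qf b s) :
    ∀ g : CliffordAlgebra Qf,
      (g * cconj Qf g = 1 ∧ cconj Qf g * g = 1) ↔
        ((∀ x y : CliffordAlgebra Qf, Qbar bas (g * x) (g * y) = Qbar bas x y) ∧
         (∀ x y : CliffordAlgebra Qf, Qbar bas (x * g) (y * g) = Qbar bas x y)) := by
  have hQortho : Pairwise fun i j => Qf.IsOrtho (b i) (b j) := fun i j hij =>
    isOrtho_of_eq_neg_bilin hQ (hortho i j hij) (hortho j i hij.symm)
  have hQne := apply_basis_ne_zero_of_nondegenerate hnd hQ hortho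
  intro g
  rw [forall_Qbar_mul_left_eq_iff hQortho hQne hbas,
    forall_Qbar_mul_right_eq_iff hQortho hQne hbas, and_comm]

theorem stmt14 {F V : Type*} [Field F] [AddCommGroup V] [Module F V]
    [FiniteDimensional F V] (h2 : (2 : F) ≠ 0)
    (B : LinearMap.BilinForm F V)
    (hsymm : ∀ v w : V, B v w = B w v)
    (hnd : ∀ v : V, (∀ w : V, B v w = 0) → v = 0)
    (Qf : QuadraticForm F V) (hQ : ∀ v : V, Qf v = -(B v v))
    {n : ℕ} (b : Module.Basis (Fin n) F V)
    (hortho : ∀ i j : Fin n, i ≠ j → B (b i) (b j) = 0)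
    (bas : Module.Basis (Finset (Fin n)) F (CliffordAlgebra Qf))
    (hbas : ∀ s : Finset (Fin n), bas s = eI Qf b s) :
    ∀ g : CliffordAlgebra Qf,
      (g * cconj Qf g = 1 ∧ cconj Qf g * g = 1) ↔
        ((∀ x y : CliffordAlgebra Qf, Qbar bas (g * x) (g * y) = Qbar bas x y) ∧
         (∀ x y : CliffordAlgebra Qf, Qbar bas (x * g) (y * g) = Qbar bas x y)) :=
  stmt14_general B hnd Qf hQ b hortho bas hbas
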